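/- arXiv:2602.00815 — 2 statements merged into one kernel-verified Lean document; each statement's English description precedes it below -/
import Mathlib

section
/- Let E be a complete real inner product space, let J : E → ℝ be differentiable with gradient ∇J, satisfying for some L > 0 the L-smoothness lower bound: for all θ, θ' ∈ E, J(θ') ≥ J(θ) + ⟨∇J(θ), θ' − θ⟩ − (L/2)·‖θ' − θ‖². Suppose moreover J satisfies the Polyak–Łojasiewicz condition with constant c > 0 relative to a value J⋆ ∈ ℝ: for all θ ∈ E, ‖∇J(θ)‖² ≥ c·(J⋆ − J(θ)). Fix θ ∈ E and α > 0 with α·(1 − Lα/2) ≥ 0. Let (Ω, μ) be a probability space and g : Ω → E Bochner-integrable with ∫ g dμ = ∇J(θ), with ω ↦ ‖g(ω)‖² integrable, ∫ ‖g(ω) − ∇J(θ)‖² dμ ≤ δ² for some δ ≥ 0, and ω ↦ J(θ + α·g(ω)) integrable. Then J⋆ − ∫ J(θ + α·g(ω)) dμ(ω) ≤ (1 − α·c·(1 − Lα/2))·(J⋆ − J(θ)) + (L·α²·δ²)/2. -/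
/-!
The smoothness lower bound at `θ`, applied to the step `α • g ω` and averaged, gives
`E[J(θ + α g)] ≥ J(θ) + α‖∇J(θ)‖² - (Lα²/2) E‖g‖²`, because `g` is unbiased.
The bias–variance decomposition `E‖g‖² = ‖∇J(θ)‖² + E‖g - ∇J(θ)‖² ≤ ‖∇J(θ)‖² + δ²` turns this into
a decrease of the gap by `α(1 - Lα/2)‖∇J(θ)‖²` up to `Lα²δ²/2`, and the PL inequality bounds
`‖∇J(θ)‖²` below by `c(J⋆ - J(θ))`.
-/

open MeasureTheory RealInnerProductSpace

section

variable {E : Type*} [NormedAddCommGroup E] [InnerProductSpace ℝ E]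

theorem le_add_smul_of_smooth_lower_bound {J : E → ℝ} {θ G : E} {L : ℝ}
    (hsmooth : ∀ θ' : E, J θ' ≥ J θ + ⟪G, θ' - θ⟫ - L / 2 * ‖θ' - θ‖ ^ 2) (α : ℝ) (u : E) :
    J θ + α * ⟪G, u⟫ - L * α ^ 2 / 2 * ‖u‖ ^ 2 ≤ J (θ + α • u) := by
  have h := hsmooth (θ + α • u)
  rw [add_sub_cancel_left, real_inner_smul_right, norm_smul, mul_pow, Real.norm_eq_abs,
    sq_abs] at h
  linarith

variable [CompleteSpace E] {Ω : Type*} [MeasurableSpace Ω] {μ : Measure Ω}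
  [IsProbabilityMeasure μ] {g : Ω → E}

theorem integral_norm_sub_integral_sq (hg : Integrable g μ)
    (hg_sq : Integrable (fun ω => ‖g ω‖ ^ 2) μ) :
    ∫ ω, ‖g ω - ∫ ω', g ω' ∂μ‖ ^ 2 ∂μ = ∫ ω, ‖g ω‖ ^ 2 ∂μ - ‖∫ ω, g ω ∂μ‖ ^ 2 := by
  set m := ∫ ω, g ω ∂μ
  have h_inner : Integrable (fun ω => 2 * ⟪m, g ω⟫) μ := (hg.const_inner m).const_mul 2
  have h_diff : Integrable (fun ω => ‖g ω‖ ^ 2 - 2 * ⟪m, g ω⟫) μ := hg_sq.sub h_inner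
  have h_expand : ∀ ω, ‖g ω - m‖ ^ 2 = ‖g ω‖ ^ 2 - 2 * ⟪m, g ω⟫ + ‖m‖ ^ 2 := fun ω => by
    rw [norm_sub_sq_real, real_inner_comm]
  simp_rw [h_expand]
  rw [integral_add h_diff (integrable_const _), integral_sub hg_sq h_inner,
    integral_const_mul, integral_inner hg, real_inner_self_eq_norm_sq, integral_const]
  simp only [probReal_univ, one_smul]
  ring

theorem le_integral_add_smul_of_smooth_lower_bound {J : E → ℝ} {θ G : E} {L : ℝ}
    (hsmooth : ∀ θ' : E, J θ' ≥ J θ + ⟪G, θ' - θ⟫ - L / 2 * ‖θ' - θ‖ ^ 2) (α : ℝ)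
    (hg : Integrable g μ) (hg_mean : ∫ ω, g ω ∂μ = G)
    (hg_sq : Integrable (fun ω => ‖g ω‖ ^ 2) μ)
    (hJ : Integrable (fun ω => J (θ + α • g ω)) μ) :
    J θ + α * ‖G‖ ^ 2 - L * α ^ 2 / 2 * ∫ ω, ‖g ω‖ ^ 2 ∂μ ≤ ∫ ω, J (θ + α • g ω) ∂μ := by
  have h_lin : Integrable (fun ω => J θ + α * ⟪G, g ω⟫) μ :=
    (integrable_const _).add ((hg.const_inner G).const_mul α)
  have h_mono : ∫ ω, (J θ + α * ⟪G, g ω⟫ - L * α ^ 2 / 2 * ‖g ω‖ ^ 2) ∂μ ≤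
      ∫ ω, J (θ + α • g ω) ∂μ := integral_mono (h_lin.sub (hg_sq.const_mul _)) hJ fun ω =>
    le_add_smul_of_smooth_lower_bound hsmooth α (g ω)
  rwa [integral_sub h_lin (hg_sq.const_mul _), integral_add (integrable_const _)
    ((hg.const_inner G).const_mul α), integral_const_mul, integral_const_mul,
    integral_inner hg, hg_mean, real_inner_self_eq_norm_sq, integral_const, probReal_univ,
    one_smul] at h_mono

end

theorem stmt_1_general
    {E : Type*} [NormedAddCommGroup E] [InnerProductSpace ℝ E] [CompleteSpace E]
    (J : E → ℝ) (gradJ : E → E)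
    (L : ℝ) (hL : 0 < L)
    (hsmooth : ∀ θ θ' : E,
      J θ' ≥ J θ + ⟪gradJ θ, θ' - θ⟫ - L / 2 * ‖θ' - θ‖ ^ 2)
    (c : ℝ) (Jstar : ℝ)
    (hPL : ∀ θ : E, ‖gradJ θ‖ ^ 2 ≥ c * (Jstar - J θ))
    (θ : E) (α : ℝ) (hstep : α * (1 - L * α / 2) ≥ 0)
    {Ω : Type*} [MeasurableSpace Ω] (μ : Measure Ω) [IsProbabilityMeasure μ]
    (g : Ω → E) (hg_int : Integrable g μ)
    (hg_mean : ∫ ω, g ω ∂μ = gradJ θ)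
    (hg_sq_int : Integrable (fun ω => ‖g ω‖ ^ 2) μ)
    (δ : ℝ)
    (hg_var : ∫ ω, ‖g ω - gradJ θ‖ ^ 2 ∂μ ≤ δ ^ 2)
    (hJ_int : Integrable (fun ω => J (θ + α • g ω)) μ) :
    Jstar - ∫ ω, J (θ + α • g ω) ∂μ ≤
      (1 - α * c * (1 - L * α / 2)) * (Jstar - J θ) + L * α ^ 2 * δ ^ 2 / 2 := by
  have h_descent := le_integral_add_smul_of_smooth_lower_bound (hsmooth θ) α hg_int hg_mean
    hg_sq_int hJ_int
  have h_second_moment : ∫ ω, ‖g ω‖ ^ 2 ∂μ ≤ ‖gradJ θ‖ ^ 2 + δ ^ 2 := by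
    have h_bias_variance := integral_norm_sub_integral_sq hg_int hg_sq_int
    rw [hg_mean] at h_bias_variance
    linarith
  have h_PL := mul_le_mul_of_nonneg_left (hPL θ) hstep
  have h_noise := mul_le_mul_of_nonneg_left h_second_moment (by positivity : 0 ≤ L * α ^ 2 / 2)
  linarith

/-- One-step contraction of the optimality gap under the Polyak–Łojasiewicz
condition: `J⋆ - E[J(θ + α g)] ≤ (1 - αc(1 - Lα/2))(J⋆ - J(θ)) + Lα²δ²/2`. -/
theorem stmt_1
    {E : Type*} [NormedAddCommGroup E] [InnerProductSpace ℝ E] [CompleteSpace E]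
    (J : E → ℝ) (gradJ : E → E)
    (hgrad : ∀ θ, HasGradientAt J (gradJ θ) θ)
    (L : ℝ) (hL : 0 < L)
    (hsmooth : ∀ θ θ' : E,
      J θ' ≥ J θ + ⟪gradJ θ, θ' - θ⟫ - L / 2 * ‖θ' - θ‖ ^ 2)
    (c : ℝ) (hc : 0 < c) (Jstar : ℝ)
    (hPL : ∀ θ : E, ‖gradJ θ‖ ^ 2 ≥ c * (Jstar - J θ))
    (θ : E) (α : ℝ) (hα : 0 < α) (hstep : α * (1 - L * α / 2) ≥ 0)
    {Ω : Type*} [MeasurableSpace Ω] (μ : Measure Ω) [IsProbabilityMeasure μ]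
    (g : Ω → E) (hg_int : Integrable g μ)
    (hg_mean : ∫ ω, g ω ∂μ = gradJ θ)
    (hg_sq_int : Integrable (fun ω => ‖g ω‖ ^ 2) μ)
    (δ : ℝ) (hδ : 0 ≤ δ)
    (hg_var : ∫ ω, ‖g ω - gradJ θ‖ ^ 2 ∂μ ≤ δ ^ 2)
    (hJ_int : Integrable (fun ω => J (θ + α • g ω)) μ) :
    Jstar - ∫ ω, J (θ + α • g ω) ∂μ ≤
      (1 - α * c * (1 - L * α / 2)) * (Jstar - J θ) + L * α ^ 2 * δ ^ 2 / 2 :=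
  stmt_1_general J gradJ L hL hsmooth c Jstar hPL θ α hstep μ g hg_int hg_mean hg_sq_int δ hg_var
    hJ_int
end

section
/- Let E be a complete real inner product space, let J : E → ℝ be differentiable with gradient ∇J, satisfying for some L > 0 the L-smoothness lower bound: for all θ, θ' ∈ E, J(θ') ≥ J(θ) + ⟨∇J(θ), θ' − θ⟩ − (L/2)·‖θ' − θ‖², and the Polyak–Łojasiewicz condition with constant c > 0 relative to J⋆ ∈ ℝ: ‖∇J(θ)‖² ≥ c·(J⋆ − J(θ)) for all θ, with additionally J(θ) ≤ J⋆ for all θ ∈ E. Let (Ω, F, μ) be a probability space with a filtration (F_t)_{t ∈ ℕ}, and let α > 0 satisfy L·α ≤ 1; set η := α·c/2 and assume 0 < η < 1. Let (θ_t)_{t ∈ ℕ} and (g_t)_{t ∈ ℕ} be sequences of random vectors Ω → E such that: θ_0 is a.e. equal to a constant θ₀ ∈ E with J⋆ − J(θ₀) = ε > 0; θ_{t+1} = θ_t + α·g_t a.e. for each t; each θ_t is F_t-measurable and each g_t is F_{t+1}-measurable; for each t, g_t is Bochner-integrable with conditional expectation E[g_t | F_t] = ∇J(θ_t) a.e.;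 for each t, ω ↦ ‖g_t(ω)‖² is integrable and E[‖g_t − ∇J(θ_t)‖² | F_t] ≤ δ² a.e. for some δ ≥ 0 with L·α²·δ² ≤ η·ε'; and for each t, ω ↦ J(θ_t(ω)) is integrable. Then for every ε' > 0 and every natural number N with N ≥ Real.log(2·ε/ε') / (−Real.log(1 − η)), the expected optimality gap satisfies ∫ (J⋆ − J(θ_N(ω))) dμ(ω) ≤ ε'. -/
/-!
Write `Δ_t = J⋆ - E[J(θ_t)]`. Smoothness along the update `θ_{t+1} = θ_t + α g_t` gives
`J(θ_{t+1}) ≥ J(θ_t) + α ⟪∇J(θ_t), g_t⟫ - (L α² / 2) ‖g_t‖²`. Unbiasedness turns the expected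
inner product into `E‖∇J(θ_t)‖²` and splits `E‖g_t‖²` into the variance (at most `δ²`) plus
`E‖∇J(θ_t)‖²`; with `L α ≤ 1` and the PL inequality this yields the contraction
`Δ_{t+1} ≤ (1 - η) Δ_t + η ε' / 2`. Hence `Δ_N - ε'/2 ≤ (1 - η)^N ε`, and the choice of `N` makes
`(1 - η)^N ε ≤ ε' / 2`. Integrability of `‖∇J(θ_t)‖²` comes from `‖∇J‖² ≤ 2 L (J⋆ - J)`, a
consequence of smoothness and `J ≤ J⋆`.
-/

open MeasureTheory RealInnerProductSpace

section Smooth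

variable {E : Type*} [NormedAddCommGroup E] [InnerProductSpace ℝ E]
  {J : E → ℝ} {gradJ : E → E} {L : ℝ}

theorem norm_sq_le_two_mul_gap_of_smooth (hL : 0 < L)
    (hsmooth : ∀ θ θ' : E, J θ' ≥ J θ + ⟪gradJ θ, θ' - θ⟫ - L / 2 * ‖θ' - θ‖ ^ 2)
    {M : ℝ} (hbound : ∀ θ, J θ ≤ M) (θ : E) :
    ‖gradJ θ‖ ^ 2 ≤ 2 * L * (M - J θ) := by
  have h := hsmooth θ (θ + L⁻¹ • gradJ θ)
  rw [add_sub_cancel_left, real_inner_smul_right, real_inner_self_eq_norm_sq, norm_smul,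
    Real.norm_eq_abs, abs_of_pos (inv_pos.mpr hL), mul_pow] at h
  have hquad : L⁻¹ * ‖gradJ θ‖ ^ 2 - L / 2 * (L⁻¹ ^ 2 * ‖gradJ θ‖ ^ 2)
      = ‖gradJ θ‖ ^ 2 / (2 * L) := by
    field_simp
    ring
  have := hbound (θ + L⁻¹ • gradJ θ)
  rw [← div_le_iff₀' (by positivity)]
  linarith

theorem le_apply_add_smul_of_smooth
    (hsmooth : ∀ θ θ' : E, J θ' ≥ J θ + ⟪gradJ θ, θ' - θ⟫ - L / 2 * ‖θ' - θ‖ ^ 2)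
    (θ g : E) (α : ℝ) :
    J θ + α * ⟪gradJ θ, g⟫ - L / 2 * α ^ 2 * ‖g‖ ^ 2 ≤ J (θ + α • g) := by
  have h := hsmooth θ (θ + α • g)
  rw [add_sub_cancel_left, real_inner_smul_right, norm_smul, Real.norm_eq_abs, mul_pow,
    sq_abs] at h
  linarith

end Smooth

section CondExp

variable {Ω : Type*} {m m₀ : MeasurableSpace Ω} {μ : Measure Ω}
  {E : Type*} [NormedAddCommGroup E] [InnerProductSpace ℝ E]

theorem integral_le_of_condExp_le_const [IsProbabilityMeasure μ] (hm : m ≤ m₀) {f : Ω → ℝ}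
    {C : ℝ} (h : μ[f | m] ≤ᵐ[μ] fun _ => C) : ∫ ω, f ω ∂μ ≤ C := by
  rw [← integral_condExp hm]
  simpa using integral_mono_ae integrable_condExp (integrable_const C) h

theorem MeasureTheory.MemLp.integrable_inner {f g : Ω → E} (hf : MemLp f 2 μ)
    (hg : MemLp g 2 μ) : Integrable (fun ω => ⟪f ω, g ω⟫) μ :=
  memLp_one_iff_integrable.1 <| hf.of_bilin (fun x y => ⟪x, y⟫) 1 hg (hf.1.inner hg.1)
    (ae_of_all _ fun ω => by simpa using nnnorm_inner_le_nnnorm (𝕜 := ℝ) (f ω) (g ω))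

variable [CompleteSpace E] [IsFiniteMeasure μ]

theorem integral_inner_eq_integral_norm_sq_of_condExp_ae_eq (hm : m ≤ m₀) {g G : Ω → E}
    (hg : Integrable g μ) (hGg : Integrable (fun ω => ⟪G ω, g ω⟫) μ)
    (hcond : μ[g | m] =ᵐ[μ] G) :
    ∫ ω, ⟪G ω, g ω⟫ ∂μ = ∫ ω, ‖G ω‖ ^ 2 ∂μ := by
  have hGm : AEStronglyMeasurable[m] G μ :=
    stronglyMeasurable_condExp.aestronglyMeasurable.congr hcond
  have hpull := condExp_bilin_of_aestronglyMeasurable_left (innerSL ℝ) hGm hGg hg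
  rw [← integral_condExp hm]
  refine integral_congr_ae ?_
  filter_upwards [hpull, hcond] with ω hω hgω
  exact hω.trans (by rw [hgω, innerSL_apply_apply, real_inner_self_eq_norm_sq])

theorem integral_norm_sq_eq_of_condExp_ae_eq (hm : m ≤ m₀) {g G : Ω → E}
    (hg : MemLp g 2 μ) (hG : MemLp G 2 μ) (hcond : μ[g | m] =ᵐ[μ] G) :
    ∫ ω, ‖g ω‖ ^ 2 ∂μ = ∫ ω, ‖g ω - G ω‖ ^ 2 ∂μ + ∫ ω, ‖G ω‖ ^ 2 ∂μ := by
  have hGg := hG.integrable_inner hg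
  have hcross := integral_inner_eq_integral_norm_sq_of_condExp_ae_eq hm
    (hg.integrable one_le_two) hGg hcond
  have hexpand : (fun ω => ‖g ω - G ω‖ ^ 2)
      = fun ω => ‖g ω‖ ^ 2 - 2 * ⟪G ω, g ω⟫ + ‖G ω‖ ^ 2 := by
    funext ω
    rw [norm_sub_sq_real, real_inner_comm]
  have hg2 := hg.integrable_norm_pow two_ne_zero
  rw [hexpand, integral_add ?_ (hG.integrable_norm_pow two_ne_zero),
    integral_sub hg2 (hGg.const_mul 2), integral_const_mul, hcross]
  · ring
  · exact hg2.sub (hGg.const_mul 2)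

end CondExp

theorem integral_gap_le_of_sgd_step {Ω : Type*} {m m₀ : MeasurableSpace Ω} {μ : Measure Ω}
    [IsProbabilityMeasure μ] (hm : m ≤ m₀)
    {E : Type*} [NormedAddCommGroup E] [InnerProductSpace ℝ E] [CompleteSpace E]
    {J : E → ℝ} {gradJ : E → E} {L c M α δ : ℝ} (hL : 0 < L)
    (hsmooth : ∀ θ θ' : E, J θ' ≥ J θ + ⟪gradJ θ, θ' - θ⟫ - L / 2 * ‖θ' - θ‖ ^ 2)
    (hPL : ∀ θ : E, ‖gradJ θ‖ ^ 2 ≥ c * (M - J θ)) (hbound : ∀ θ, J θ ≤ M)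
    (hα : 0 < α) (hLα : L * α ≤ 1) {θ θ' g : Ω → E}
    (hupd : θ' =ᵐ[μ] fun ω => θ ω + α • g ω) (hg : MemLp g 2 μ)
    (hunbiased : μ[g | m] =ᵐ[μ] fun ω => gradJ (θ ω))
    (hvar : μ[fun ω => ‖g ω - gradJ (θ ω)‖ ^ 2 | m] ≤ᵐ[μ] fun _ => δ ^ 2)
    (hJ : Integrable (fun ω => J (θ ω)) μ) (hJ' : Integrable (fun ω => J (θ' ω)) μ) :
    ∫ ω, (M - J (θ' ω)) ∂μ
      ≤ (1 - α * c / 2) * ∫ ω, (M - J (θ ω)) ∂μ + L * α ^ 2 * δ ^ 2 / 2 := by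
  set G : Ω → E := fun ω => gradJ (θ ω)
  have hgap : Integrable (fun ω => M - J (θ ω)) μ := (integrable_const M).sub hJ
  have hG : MemLp G 2 μ := by
    have hGmeas : AEStronglyMeasurable G μ :=
      (stronglyMeasurable_condExp.mono hm).aestronglyMeasurable.congr hunbiased
    refine (memLp_two_iff_integrable_sq_norm hGmeas).2 ?_
    refine (hgap.const_mul (2 * L)).mono' (hGmeas.norm.pow 2) (ae_of_all _ fun ω => ?_)
    rw [Real.norm_of_nonneg (by positivity)]
    exact norm_sq_le_two_mul_gap_of_smooth hL hsmooth hbound _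
  have hGg : Integrable (fun ω => ⟪G ω, g ω⟫) μ := hG.integrable_inner hg
  have hg2 : Integrable (fun ω => ‖g ω‖ ^ 2) μ := hg.integrable_norm_pow two_ne_zero
  have hdescent : ∫ ω, (M - J (θ' ω)) ∂μ
      ≤ ∫ ω, (M - J (θ ω)) ∂μ - α * ∫ ω, ⟪G ω, g ω⟫ ∂μ
        + L / 2 * α ^ 2 * ∫ ω, ‖g ω‖ ^ 2 ∂μ := by
    have hlin : Integrable (fun ω => M - J (θ ω) - α * ⟪G ω, g ω⟫) μ :=
      hgap.sub (hGg.const_mul α)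
    rw [← integral_const_mul, ← integral_const_mul, ← integral_sub hgap (hGg.const_mul α),
      ← integral_add hlin (hg2.const_mul _)]
    refine integral_mono_ae ((integrable_const M).sub hJ') (hlin.add (hg2.const_mul _)) ?_
    filter_upwards [hupd] with ω hω
    have := le_apply_add_smul_of_smooth hsmooth (θ ω) (g ω) α
    rw [hω]
    linarith
  have hcross : ∫ ω, ⟪G ω, g ω⟫ ∂μ = ∫ ω, ‖G ω‖ ^ 2 ∂μ :=
    integral_inner_eq_integral_norm_sq_of_condExp_ae_eq hm (hg.integrable one_le_two) hGg
      hunbiased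
  have hsplit := integral_norm_sq_eq_of_condExp_ae_eq hm hg hG hunbiased
  have hnoise : ∫ ω, ‖g ω - G ω‖ ^ 2 ∂μ ≤ δ ^ 2 := integral_le_of_condExp_le_const hm hvar
  have hPL' : c * ∫ ω, (M - J (θ ω)) ∂μ ≤ ∫ ω, ‖G ω‖ ^ 2 ∂μ := by
    rw [← integral_const_mul]
    exact integral_mono (hgap.const_mul c) (hG.integrable_norm_pow two_ne_zero) fun ω => hPL _
  have hA : 0 ≤ ∫ ω, ‖G ω‖ ^ 2 ∂μ := integral_nonneg fun ω => by positivity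
  rw [hcross, hsplit] at hdescent
  -- since `L α ≤ 1`, the drift `α (1 - L α / 2) E‖∇J‖²` is at least `(α / 2) E‖∇J‖²`
  nlinarith [mul_nonneg (mul_nonneg hα.le (sub_nonneg.mpr hLα)) hA,
    mul_le_mul_of_nonneg_left hnoise (by positivity : (0 : ℝ) ≤ L / 2 * α ^ 2)]

theorem sub_le_pow_mul_of_le_mul_add {u : ℕ → ℝ} {q b : ℝ} (hq : 0 ≤ q)
    (h : ∀ n, u (n + 1) ≤ q * u n + (1 - q) * b) (n : ℕ) :
    u n - b ≤ q ^ n * (u 0 - b) := by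
  induction n with
  | zero => simp
  | succ n ih =>
    calc u (n + 1) - b ≤ q * (u n - b) := by linarith [h n]
      _ ≤ q * (q ^ n * (u 0 - b)) := mul_le_mul_of_nonneg_left ih hq
      _ = q ^ (n + 1) * (u 0 - b) := by ring

theorem pow_mul_le_one_of_log_div_le {q a : ℝ} (hq₀ : 0 < q) (hq₁ : q < 1) (ha : 0 < a)
    {N : ℕ} (hN : Real.log a / (-Real.log q) ≤ N) : q ^ N * a ≤ 1 := by
  have hlog : 0 < -Real.log q := neg_pos.mpr (Real.log_neg hq₀ hq₁)
  rw [div_le_iff₀ hlog] at hN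
  rw [← Real.log_nonpos_iff (by positivity), Real.log_mul (by positivity) ha.ne',
    Real.log_pow]
  linarith

theorem stmt_6_general
    {E : Type*} [NormedAddCommGroup E] [InnerProductSpace ℝ E] [CompleteSpace E]
    (J : E → ℝ) (gradJ : E → E)
    (L : ℝ) (hL : 0 < L)
    (hsmooth : ∀ θ θ' : E,
      J θ' ≥ J θ + ⟪gradJ θ, θ' - θ⟫ - L / 2 * ‖θ' - θ‖ ^ 2)
    (c : ℝ) (Jstar : ℝ)
    (hPL : ∀ θ : E, ‖gradJ θ‖ ^ 2 ≥ c * (Jstar - J θ))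
    (hbound : ∀ θ : E, J θ ≤ Jstar)
    {Ω : Type*} {m : MeasurableSpace Ω} (μ : Measure Ω) [IsProbabilityMeasure μ]
    (ℱ : Filtration ℕ m)
    (α : ℝ) (hα : 0 < α) (hLα : L * α ≤ 1)
    (η : ℝ) (hη : η = α * c / 2) (hη0 : 0 < η) (hη1 : η < 1)
    (θseq gseq : ℕ → Ω → E)
    (θ₀ : E) (ε : ℝ) (hθ0 : θseq 0 =ᵐ[μ] fun _ => θ₀)
    (hgap : Jstar - J θ₀ = ε) (hε : 0 < ε)
    (hupd : ∀ t : ℕ, θseq (t + 1) =ᵐ[μ] fun ω => θseq t ω + α • gseq t ω)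
    (hg_int : ∀ t : ℕ, Integrable (gseq t) μ)
    (hg_unbiased : ∀ t : ℕ, μ[gseq t | ℱ t] =ᵐ[μ] fun ω => gradJ (θseq t ω))
    (hg_sq_int : ∀ t : ℕ, Integrable (fun ω => ‖gseq t ω‖ ^ 2) μ)
    (δ : ℝ)
    (hg_var : ∀ t : ℕ,
      μ[fun ω => ‖gseq t ω - gradJ (θseq t ω)‖ ^ 2 | ℱ t] ≤ᵐ[μ] fun _ => δ ^ 2)
    (ε' : ℝ) (hε' : 0 < ε')
    (hnoise : L * α ^ 2 * δ ^ 2 ≤ η * ε')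
    (hJ_int : ∀ t : ℕ, Integrable (fun ω => J (θseq t ω)) μ) :
    ∀ N : ℕ, (N : ℝ) ≥ Real.log (2 * ε / ε') / (-Real.log (1 - η)) →
      ∫ ω, (Jstar - J (θseq N ω)) ∂μ ≤ ε' := by
  intro N hN
  set Δ : ℕ → ℝ := fun t => ∫ ω, (Jstar - J (θseq t ω)) ∂μ
  have hΔ0 : Δ 0 = ε := by
    have : Δ 0 = ∫ _, (Jstar - J θ₀) ∂μ := integral_congr_ae (hθ0.mono fun ω hω => by simp [hω])
    simp [this, hgap]
  have hstep (t : ℕ) : Δ (t + 1) ≤ (1 - η) * Δ t + (1 - (1 - η)) * (ε' / 2) := by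
    have := integral_gap_le_of_sgd_step (ℱ.le t) hL hsmooth hPL hbound hα hLα (hupd t)
      ((memLp_two_iff_integrable_sq_norm (hg_int t).1).2 (hg_sq_int t)) (hg_unbiased t)
      (hg_var t) (hJ_int t) (hJ_int (t + 1))
    rw [← hη] at this
    linarith
  have hrec := sub_le_pow_mul_of_le_mul_add (by linarith) hstep N
  have hpow := pow_mul_le_one_of_log_div_le (by linarith) (by linarith)
    (by positivity : 0 < 2 * ε / ε') hN
  rw [hΔ0] at hrec
  rw [mul_div_assoc', div_le_one hε'] at hpow
  nlinarith [pow_nonneg (by linarith : 0 ≤ 1 - η) N]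

/-- Theorem 1 of the paper: one-sample-per-step stochastic gradient ascent with
unbiased, conditionally variance-bounded gradient estimates, on an `L`-smooth
objective satisfying the Polyak–Łojasiewicz condition, reduces the expected
optimality gap `J⋆ - E[J(θ_N)]` below `ε'` after `N ≥ log(2ε/ε')/(-log(1-η))`
steps, where `η = αc/2` and `ε` is the initial gap. -/
theorem stmt_6
    {E : Type*} [NormedAddCommGroup E] [InnerProductSpace ℝ E] [CompleteSpace E]
    (J : E → ℝ) (gradJ : E → E)
    (hgrad : ∀ θ, HasGradientAt J (gradJ θ) θ)
    (L : ℝ) (hL : 0 < L)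
    (hsmooth : ∀ θ θ' : E,
      J θ' ≥ J θ + ⟪gradJ θ, θ' - θ⟫ - L / 2 * ‖θ' - θ‖ ^ 2)
    (c : ℝ) (hc : 0 < c) (Jstar : ℝ)
    (hPL : ∀ θ : E, ‖gradJ θ‖ ^ 2 ≥ c * (Jstar - J θ))
    (hbound : ∀ θ : E, J θ ≤ Jstar)
    {Ω : Type*} {m : MeasurableSpace Ω} (μ : Measure Ω) [IsProbabilityMeasure μ]
    (ℱ : Filtration ℕ m)
    (α : ℝ) (hα : 0 < α) (hLα : L * α ≤ 1)
    (η : ℝ) (hη : η = α * c / 2) (hη0 : 0 < η) (hη1 : η < 1)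
    (θseq gseq : ℕ → Ω → E)
    (θ₀ : E) (ε : ℝ) (hθ0 : θseq 0 =ᵐ[μ] fun _ => θ₀)
    (hgap : Jstar - J θ₀ = ε) (hε : 0 < ε)
    (hupd : ∀ t : ℕ, θseq (t + 1) =ᵐ[μ] fun ω => θseq t ω + α • gseq t ω)
    (hθ_meas : ∀ t : ℕ, StronglyMeasurable[ℱ t] (θseq t))
    (hg_meas : ∀ t : ℕ, StronglyMeasurable[ℱ (t + 1)] (gseq t))
    (hg_int : ∀ t : ℕ, Integrable (gseq t) μ)
    (hg_unbiased : ∀ t : ℕ, μ[gseq t | ℱ t] =ᵐ[μ] fun ω => gradJ (θseq t ω))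
    (hg_sq_int : ∀ t : ℕ, Integrable (fun ω => ‖gseq t ω‖ ^ 2) μ)
    (δ : ℝ) (hδ : 0 ≤ δ)
    (hg_var : ∀ t : ℕ,
      μ[fun ω => ‖gseq t ω - gradJ (θseq t ω)‖ ^ 2 | ℱ t] ≤ᵐ[μ] fun _ => δ ^ 2)
    (ε' : ℝ) (hε' : 0 < ε')
    (hnoise : L * α ^ 2 * δ ^ 2 ≤ η * ε')
    (hJ_int : ∀ t : ℕ, Integrable (fun ω => J (θseq t ω)) μ) :
    ∀ N : ℕ, (N : ℝ) ≥ Real.log (2 * ε / ε') / (-Real.log (1 - η)) →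
      ∫ ω, (Jstar - J (θseq N ω)) ∂μ ≤ ε' :=
  stmt_6_general J gradJ L hL hsmooth c Jstar hPL hbound μ ℱ α hα hLα η hη hη0 hη1 θseq gseq θ₀ ε
    hθ0 hgap hε hupd hg_int hg_unbiased hg_sq_int δ hg_var ε' hε' hnoise hJ_int
end
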